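/- arXiv:0911.3557 — 6 statements merged into one kernel-verified Lean document; each statement's English description precedes it below -/
import Mathlib

section
/- Let β ∈ (0,1) and A₁ ∈ (0, 1/(1+β)), and let ξ₊ > 0 be defined by cosh ξ₊ = (1 + √(1 − 4βA₁²))/(2βA₁). Then cosh ξ − βA₁ cosh²ξ − A₁ > 0 for every ξ ∈ (−ξ₊, ξ₊), and (1/√a) · ∫_{−ξ₊}^{ξ₊} dξ/√(cosh ξ − βA₁ cosh²ξ − A₁) = T₁(β,A₁); that is, the period of the one-dimensional motion (ξ')² = 4a(cosh ξ − βA₁ cosh²ξ − A₁) between its inversion points ±ξ₊ equals 2√(2/a)·(1−4βA₁²)^{−1/4}·K(κ₁(β,A₁)). -/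
/-
The integrand is even in `ξ`, and `x = cosh ξ` turns half of the integral into
`∫₁^{cosh ξ₊} dx / √(b (x₊ - x)(x - x₋)(x - 1)(x + 1))` with `b = βA₁` and `x₋ < x₊ = cosh ξ₊` the
roots of `x - b x² - A₁`. The quartic has the four real roots `-1 < x₋ < 1 < x₊`, and the classical
substitution, a Möbius transformation in `v²` sending `1, x₊` to `v = 0, 1`, brings the integral
over `(1, x₊)` to Legendre normal form, producing `K(κ₁)`.
-/

open Real Filter Topology

/-- The complete elliptic integral of the first kind,
`K(κ) = ∫₀¹ dv / √((1 - v²)(1 - κ² v²))`. -/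
noncomputable def K (κ : ℝ) : ℝ :=
  ∫ v in (0:ℝ)..1, 1 / Real.sqrt ((1 - v ^ 2) * (1 - κ ^ 2 * v ^ 2))

/-- The modulus `κ₁(β, A₁)`, defined by
`κ₁² = (A₁(1-β) + √(1-4βA₁²)) / (2√(1-4βA₁²))`. -/
noncomputable def κ₁ (β A₁ : ℝ) : ℝ :=
  Real.sqrt ((A₁ * (1 - β) + Real.sqrt (1 - 4 * β * A₁ ^ 2)) /
    (2 * Real.sqrt (1 - 4 * β * A₁ ^ 2)))

/-- The modulus `κ₂(β)`, defined by `κ₂² = β/(1+β)`. -/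
noncomputable def κ₂ (β : ℝ) : ℝ := Real.sqrt (β / (1 + β))

/-- The period `T₁(β,A₁) = 2√(2/a) (1-4βA₁²)^{-1/4} K(κ₁(β,A₁))` of the ξ-motion. -/
noncomputable def T₁ (a β A₁ : ℝ) : ℝ :=
  2 * Real.sqrt (2 / a) / (1 - 4 * β * A₁ ^ 2) ^ ((1:ℝ)/4) * K (κ₁ β A₁)

/-- The period `T₂(β,A₁) = 2/√(a A₁ (1+β)) · K(κ₂(β))` of the φ-motion. -/
noncomputable def T₂ (a β A₁ : ℝ) : ℝ :=
  2 / Real.sqrt (a * A₁ * (1 + β)) * K (κ₂ β)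

open Set MeasureTheory intervalIntegral

theorem intervalIntegral.integral_neg_self_eq_two_mul_of_even {f : ℝ → ℝ}
    (hf : Function.Even f) (a : ℝ) :
    ∫ x in -a..a, f x = 2 * ∫ x in 0..a, f x := by
  have hf : ∀ x, f (-x) = f x := hf
  have hneg : ∫ x in -a..0, f x = ∫ x in 0..a, f x := by
    simpa [hf] using (integral_comp_neg (a := 0) (b := a) f).symm
  by_cases hint : IntervalIntegrable f volume 0 a
  · have hint' : IntervalIntegrable f volume (-a) 0 := by
      simpa [hf] using ((IntervalIntegrable.iff_comp_neg (by simp)).1 hint).symm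
    rw [← integral_add_adjacent_intervals hint' hint, hneg, two_mul]
  · have hint' : ¬ IntervalIntegrable f volume (-a) a := fun h =>
      hint (h.mono_set (uIcc_subset_uIcc (by simp [uIcc]; grind) right_mem_uIcc))
    rw [integral_undef hint, integral_undef hint', mul_zero]

theorem integral_comp_cosh (h : ℝ → ℝ) {ξ₀ : ℝ} (hξ₀ : 0 ≤ ξ₀) :
    ∫ ξ in 0..ξ₀, h (cosh ξ) = ∫ x in 1..cosh ξ₀, h x / √(x ^ 2 - 1) := by
  have hsubst := integral_comp_mul_deriv_of_deriv_nonneg (a := 0) (b := ξ₀)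
    (g := fun x => h x / √(x ^ 2 - 1)) continuous_cosh.continuousOn
    (fun x _ => hasDerivAt_cosh x)
    (fun x hx => (sinh_pos_iff.2 (by simpa [hξ₀] using hx.1)).le)
  rw [cosh_zero] at hsubst
  rw [← hsubst]
  refine integral_congr_Ioo_of_le hξ₀ fun ξ hξ => ?_
  have hsinh : 0 < sinh ξ := sinh_pos_iff.2 hξ.1
  rw [Function.comp_apply, ← sinh_sq, sqrt_sq hsinh.le, div_mul_cancel₀ _ hsinh.ne']

/-- The solution `x` of `v² = (e₄ - e₂)(x - e₃) / ((e₄ - e₃)(x - e₂))`. -/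
noncomputable def legendreSubst (e₂ e₃ e₄ v : ℝ) : ℝ :=
  e₂ + (e₃ - e₂) * (e₄ - e₂) / (e₄ - e₂ - (e₄ - e₃) * v ^ 2)

section legendreSubst

variable {e₁ e₂ e₃ e₄ : ℝ}

theorem legendreSubst_zero (h₄₂ : e₄ - e₂ ≠ 0) : legendreSubst e₂ e₃ e₄ 0 = e₃ := by
  rw [legendreSubst, zero_pow two_ne_zero, mul_zero, sub_zero, mul_div_cancel_right₀ _ h₄₂,
    add_sub_cancel]

theorem legendreSubst_one (h₃₂ : e₃ - e₂ ≠ 0) : legendreSubst e₂ e₃ e₄ 1 = e₄ := by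
  rw [legendreSubst, one_pow, mul_one, sub_sub_sub_cancel_left, mul_div_cancel_left₀ _ h₃₂,
    add_sub_cancel]

theorem hasDerivAt_legendreSubst {v : ℝ} (hv : e₄ - e₂ - (e₄ - e₃) * v ^ 2 ≠ 0) :
    HasDerivAt (legendreSubst e₂ e₃ e₄)
      (2 * (e₃ - e₂) * (e₄ - e₂) * (e₄ - e₃) * v / (e₄ - e₂ - (e₄ - e₃) * v ^ 2) ^ 2) v := by
  have hden : HasDerivAt (fun v => e₄ - e₂ - (e₄ - e₃) * v ^ 2) (-((e₄ - e₃) * (2 * v))) v := by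
    simpa using ((hasDerivAt_pow 2 v).const_mul (e₄ - e₃)).const_sub (e₄ - e₂)
  refine (((hasDerivAt_const v ((e₃ - e₂) * (e₄ - e₂))).div hden hv).const_add e₂).congr_deriv ?_
  ring

theorem quartic_legendreSubst {k v : ℝ} (h₄₂ : e₄ - e₂ ≠ 0) (h₃₁ : e₃ - e₁ ≠ 0)
    (hv : e₄ - e₂ - (e₄ - e₃) * v ^ 2 ≠ 0)
    (hk : k ^ 2 = (e₄ - e₃) * (e₂ - e₁) / ((e₄ - e₂) * (e₃ - e₁))) :
    let x := legendreSubst e₂ e₃ e₄ v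
    (e₄ - x) * (x - e₃) * (x - e₂) * (x - e₁) =
      ((e₃ - e₂) * (e₄ - e₂) * (e₄ - e₃) * v / (e₄ - e₂ - (e₄ - e₃) * v ^ 2) ^ 2) ^ 2 *
        ((e₄ - e₂) * (e₃ - e₁) * ((1 - v ^ 2) * (1 - k ^ 2 * v ^ 2))) := by
  simp only [legendreSubst]
  rw [hk]
  field_simp
  ring

theorem integral_inv_sqrt_quartic {k : ℝ} (h₁₂ : e₁ < e₂) (h₂₃ : e₂ < e₃)
    (h₃₄ : e₃ < e₄) (hk : k ^ 2 = (e₄ - e₃) * (e₂ - e₁) / ((e₄ - e₂) * (e₃ - e₁))) :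
    ∫ x in e₃..e₄, 1 / √((e₄ - x) * (x - e₃) * (x - e₂) * (x - e₁)) =
      2 / √((e₄ - e₂) * (e₃ - e₁)) * K k := by
  have h₃₂ : 0 < e₃ - e₂ := sub_pos.2 h₂₃
  have h₄₃ : 0 < e₄ - e₃ := sub_pos.2 h₃₄
  have h₄₂ : 0 < e₄ - e₂ := h₃₂.trans (by linarith)
  have hden : ∀ v ∈ Icc (0:ℝ) 1, 0 < e₄ - e₂ - (e₄ - e₃) * v ^ 2 := fun v hv => by
    nlinarith [pow_le_one₀ (n := 2) hv.1 hv.2]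
  have hderiv := fun v (hv : v ∈ Icc (0:ℝ) 1) => hasDerivAt_legendreSubst (hden v hv).ne'
  have hsubst := integral_comp_mul_deriv_of_deriv_nonneg (a := 0) (b := 1)
    (g := fun x => 1 / √((e₄ - x) * (x - e₃) * (x - e₂) * (x - e₁)))
    (fun v hv => (hderiv v (by simpa using hv)).continuousAt.continuousWithinAt)
    (fun v hv => hderiv v (Ioo_subset_Icc_self (by simpa using hv)))
    (fun v hv => by
      have hv' : v ∈ Ioo (0:ℝ) 1 := by simpa using hv
      have := hv'.1
      positivity)
  rw [legendreSubst_zero h₄₂.ne', legendreSubst_one h₃₂.ne'] at hsubst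
  rw [← hsubst, K, ← intervalIntegral.integral_const_mul]
  refine integral_congr_Ioo_of_le zero_le_one fun v hv => ?_
  have hdv := hden v (Ioo_subset_Icc_self hv)
  have hv0 := hv.1
  have hcoef : 0 < (e₃ - e₂) * (e₄ - e₂) * (e₄ - e₃) * v / (e₄ - e₂ - (e₄ - e₃) * v ^ 2) ^ 2 := by
    positivity
  rw [Function.comp_apply, quartic_legendreSubst h₄₂.ne' (by linarith) hdv.ne' hk,
    sqrt_mul (sq_nonneg _), sqrt_sq hcoef.le, sqrt_mul (by nlinarith)]
  field_simp

end legendreSubst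

theorem sub_mul_sq_sub_eq_mul_sub_mul_sub {b A s : ℝ} (hb : b ≠ 0) (hsA : s ^ 2 = 1 - 4 * b * A)
    (x : ℝ) :
    x - b * x ^ 2 - A = b * (((1 + s) / (2 * b) - x) * (x - (1 - s) / (2 * b))) := by
  field_simp
  linear_combination -hsA

theorem abs_one_sub_two_mul_lt_and_lt_one {b A s : ℝ} (hb : 0 < b) (hA : 0 < A)
    (hAb : A + b < 1) (hs : 0 ≤ s) (hsA : s ^ 2 = 1 - 4 * b * A) :
    |1 - 2 * b| < s ∧ s < 1 := by
  refine ⟨abs_lt_of_sq_lt_sq ?_ hs, ?_⟩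
  · nlinarith [mul_pos hb (sub_pos.2 hAb)]
  · nlinarith [mul_pos hb hA]

theorem cosh_sub_mul_cosh_sq_sub_pos {b A s ξ₀ ξ : ℝ} (hb : 0 < b)
    (hsA : s ^ 2 = 1 - 4 * b * A) (hs : 1 - 2 * b < s) (hcosh : cosh ξ₀ = (1 + s) / (2 * b))
    (hξ : ξ ∈ Ioo (-ξ₀) ξ₀) :
    0 < cosh ξ - b * cosh ξ ^ 2 - A := by
  have hcosh_lt : cosh ξ < cosh ξ₀ :=
    cosh_lt_cosh.2 (by rw [abs_of_pos (a := ξ₀) (by linarith [hξ.1, hξ.2])]; exact abs_lt.2 hξ)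
  have hroot_lt : (1 - s) / (2 * b) < cosh ξ :=
    ((div_lt_one (by positivity)).2 (by linarith)).trans_le (one_le_cosh ξ)
  rw [sub_mul_sq_sub_eq_mul_sub_mul_sub hb.ne' hsA, ← hcosh]
  exact mul_pos hb (mul_pos (sub_pos.2 hcosh_lt) (sub_pos.2 hroot_lt))

theorem integral_inv_sqrt_cosh_sub_mul_cosh_sq_sub {b A s ξ₀ k : ℝ} (hb : 0 < b) (hA : 0 < A)
    (hAb : A + b < 1) (hs : 0 ≤ s) (hsA : s ^ 2 = 1 - 4 * b * A) (hξ₀ : 0 < ξ₀)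
    (hcosh : cosh ξ₀ = (1 + s) / (2 * b)) (hk : k ^ 2 = (A - b + s) / (2 * s)) :
    ∫ ξ in -ξ₀..ξ₀, 1 / √(cosh ξ - b * cosh ξ ^ 2 - A) = 2 * √(2 / s) * K k := by
  obtain ⟨hs_abs, hs1⟩ := abs_one_sub_two_mul_lt_and_lt_one hb hA hAb hs hsA
  have hs0 : 0 < s := (abs_nonneg _).trans_lt hs_abs
  set c := (1 - s) / (2 * b) with hc
  have hc0 : 0 < c := div_pos (by linarith) (by positivity)
  have hc1 : c < 1 := (div_lt_one (by positivity)).2 (by linarith [le_abs_self (1 - 2 * b)])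
  have hcosh1 : 1 < cosh ξ₀ := one_lt_cosh.2 hξ₀.ne'
  have hk' : k ^ 2 = (cosh ξ₀ - 1) * (c - -1) / ((cosh ξ₀ - c) * (1 - -1)) := by
    rw [hk, hcosh, hc, show (1 + s) / (2 * b) - (1 - s) / (2 * b) = s / b by field_simp; ring]
    field_simp
    linear_combination hsA
  have hintegrand : ∀ x ∈ Ioo 1 (cosh ξ₀), 1 / √(x - b * x ^ 2 - A) / √(x ^ 2 - 1) =
      1 / √b * (1 / √((cosh ξ₀ - x) * (x - 1) * (x - c) * (x - -1))) := fun x hx => by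
    rw [div_div, ← sqrt_mul' _ (by nlinarith [hx.1]), sub_mul_sq_sub_eq_mul_sub_mul_sub hb.ne' hsA,
      ← hcosh, ← hc, one_div_mul_one_div, ← sqrt_mul hb.le]
    congr 2
    ring
  calc ∫ ξ in -ξ₀..ξ₀, 1 / √(cosh ξ - b * cosh ξ ^ 2 - A)
      = 2 * ∫ ξ in 0..ξ₀, 1 / √(cosh ξ - b * cosh ξ ^ 2 - A) :=
        integral_neg_self_eq_two_mul_of_even (fun ξ => by rw [cosh_neg]) ξ₀
    _ = 2 * ∫ x in 1..cosh ξ₀, 1 / √b * (1 / √((cosh ξ₀ - x) * (x - 1) * (x - c) * (x - -1))) := by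
        rw [integral_comp_cosh (fun x => 1 / √(x - b * x ^ 2 - A)) hξ₀.le,
          integral_congr_Ioo_of_le hcosh1.le hintegrand]
    _ = 2 * (1 / √b * (2 / √((cosh ξ₀ - c) * (1 - -1)) * K k)) := by
        rw [intervalIntegral.integral_const_mul,
          integral_inv_sqrt_quartic (by linarith) hc1 hcosh1 hk']
    _ = 2 * (2 / (√b * √((cosh ξ₀ - c) * (1 - -1)))) * K k := by ring
    _ = 2 * √(2 / s) * K k := by
        rw [← sqrt_mul hb.le, show b * ((cosh ξ₀ - c) * (1 - -1)) = 2 * s by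
          rw [hcosh, hc]; field_simp; ring, sqrt_mul zero_le_two, sqrt_div zero_le_two]
        have : 0 < √s := sqrt_pos.2 hs0
        field_simp
        norm_num

theorem xi_period_eq_T₁_general (a : ℝ) (β : ℝ) (hβ : β ∈ Set.Ioo (0:ℝ) 1)
    (A₁ : ℝ) (hA : A₁ ∈ Set.Ioo 0 (1 / (1 + β)))
    (ξp : ℝ) (hξp : 0 < ξp)
    (hcosh : Real.cosh ξp = (1 + Real.sqrt (1 - 4 * β * A₁ ^ 2)) / (2 * β * A₁)) :
    (∀ ξ ∈ Set.Ioo (-ξp) ξp, 0 < Real.cosh ξ - β * A₁ * Real.cosh ξ ^ 2 - A₁) ∧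
    (1 / Real.sqrt a) *
      (∫ ξ in -ξp..ξp, 1 / Real.sqrt (Real.cosh ξ - β * A₁ * Real.cosh ξ ^ 2 - A₁))
      = T₁ a β A₁ := by
  obtain ⟨hβ0, hβ1⟩ := hβ
  obtain ⟨hA0, hA1⟩ := hA
  have hb : 0 < β * A₁ := mul_pos hβ0 hA0
  have hAb : A₁ + β * A₁ < 1 := by
    rw [lt_div_iff₀ (by linarith)] at hA1; linarith
  have hΔ : 0 ≤ 1 - 4 * β * A₁ ^ 2 := by nlinarith [sq_nonneg (1 - β)]
  set s := √(1 - 4 * β * A₁ ^ 2) with hs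
  have hsA : s ^ 2 = 1 - 4 * (β * A₁) * A₁ := by rw [sq_sqrt hΔ]; ring
  have hcosh' : cosh ξp = (1 + s) / (2 * (β * A₁)) := by rw [hcosh]; ring
  have hκ₁ : κ₁ β A₁ ^ 2 = (A₁ - β * A₁ + s) / (2 * s) := by
    rw [κ₁, ← hs, sq_sqrt (div_nonneg (add_nonneg (mul_nonneg hA0.le (by linarith))
      (sqrt_nonneg _)) (by positivity))]
    ring
  have hquarter : (1 - 4 * β * A₁ ^ 2) ^ ((1 : ℝ) / 4) = √s := by
    rw [hs, sqrt_eq_rpow, sqrt_eq_rpow, ← rpow_mul hΔ]; norm_num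
  obtain ⟨hs_abs, -⟩ := abs_one_sub_two_mul_lt_and_lt_one hb hA0 hAb (sqrt_nonneg _) hsA
  refine ⟨fun ξ hξ => cosh_sub_mul_cosh_sq_sub_pos hb hsA ((le_abs_self _).trans_lt hs_abs)
    hcosh' hξ, ?_⟩
  rw [integral_inv_sqrt_cosh_sub_mul_cosh_sq_sub hb hA0 hAb (sqrt_nonneg _) hsA hξp hcosh' hκ₁,
    T₁, hquarter, sqrt_div zero_le_two, sqrt_div zero_le_two]
  ring

/-- The period of the one-dimensional motion `(ξ')² = 4a(cosh ξ - βA₁ cosh²ξ - A₁)`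
between the inversion points `±ξ₊` equals `T₁(β,A₁)`. -/
theorem xi_period_eq_T₁ (a : ℝ) (ha : 0 < a) (β : ℝ) (hβ : β ∈ Set.Ioo (0:ℝ) 1)
    (A₁ : ℝ) (hA : A₁ ∈ Set.Ioo 0 (1 / (1 + β)))
    (ξp : ℝ) (hξp : 0 < ξp)
    (hcosh : Real.cosh ξp = (1 + Real.sqrt (1 - 4 * β * A₁ ^ 2)) / (2 * β * A₁)) :
    (∀ ξ ∈ Set.Ioo (-ξp) ξp, 0 < Real.cosh ξ - β * A₁ * Real.cosh ξ ^ 2 - A₁) ∧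
    (1 / Real.sqrt a) *
      (∫ ξ in -ξp..ξp, 1 / Real.sqrt (Real.cosh ξ - β * A₁ * Real.cosh ξ ^ 2 - A₁))
      = T₁ a β A₁ :=
  xi_period_eq_T₁_general a β hβ A₁ hA ξp hξp hcosh
end

section
/- For each fixed β ∈ [0,1), the function A₁ ↦ T₁(β,A₁) is strictly increasing on the interval (0, 1/(1+β)), and the function A₁ ↦ T₂(β,A₁) is strictly decreasing on (0, 1/(1+β)). -/
open Real Filter Topology

open MeasureTheory in

lemma ell_integrable {κ : ℝ} (hκ : κ ^ 2 < 1) :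
    IntervalIntegrable (fun v => 1 / Real.sqrt ((1 - v ^ 2) * (1 - κ ^ 2 * v ^ 2)))
      volume 0 1 := by
  have h1 : IntervalIntegrable (fun x : ℝ => x ^ (-(1/2) : ℝ)) volume 0 1 :=
    intervalIntegral.intervalIntegrable_rpow' (by norm_num)
  have h2 : IntervalIntegrable (fun x : ℝ => (1 - x) ^ (-(1/2) : ℝ)) volume 0 1 := by
    have := h1.comp_sub_left 1
    exact (by simpa using this : IntervalIntegrable _ volume 1 0).symm
  have h3 : IntervalIntegrable (fun x : ℝ => (1 / Real.sqrt (1 - κ ^ 2)) * (1 - x) ^ (-(1/2) : ℝ))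
      volume 0 1 := h2.const_mul _
  apply h3.mono_fun
  · apply Measurable.aestronglyMeasurable
    apply Measurable.div measurable_const
    exact (Real.continuous_sqrt.comp (by continuity)).measurable
  · rw [Set.uIoc_of_le (by norm_num : (0:ℝ) ≤ 1)]
    rw [Filter.EventuallyLE, MeasureTheory.ae_restrict_iff' measurableSet_Ioc]
    filter_upwards with x hx
    obtain ⟨hx0, hx1⟩ := hx
    have hk2 : (0:ℝ) < 1 - κ ^ 2 := by linarith
    have hA : (0:ℝ) ≤ 1 - x ^ 2 := by nlinarith
    have h1x : (0:ℝ) ≤ 1 - x := by linarith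
    have hB : (0:ℝ) < 1 - κ ^ 2 * x ^ 2 := by nlinarith [sq_nonneg κ, sq_nonneg x]
    have hf0 : (0:ℝ) ≤ 1 / Real.sqrt ((1 - x ^ 2) * (1 - κ ^ 2 * x ^ 2)) :=
      div_nonneg zero_le_one (Real.sqrt_nonneg _)
    have hrw : (1 - x) ^ (-(1/2) : ℝ) = 1 / Real.sqrt (1 - x) := by
      rw [Real.rpow_neg h1x, Real.sqrt_eq_rpow, one_div]
      norm_num
    have hg0 : (0:ℝ) ≤ (1 / Real.sqrt (1 - κ ^ 2)) * (1 - x) ^ (-(1/2) : ℝ) := by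
      rw [hrw]
      positivity
    rw [Real.norm_of_nonneg hf0, Real.norm_of_nonneg hg0, hrw]
    rw [div_mul_div_comm, one_mul, ← Real.sqrt_mul hk2.le]
    rcases eq_or_lt_of_le hx1 with rfl | hx1'
    · simp
    · have hAB : (0:ℝ) < (1 - κ ^ 2) * (1 - x) := by nlinarith
      apply one_div_le_one_div_of_le (Real.sqrt_pos.mpr hAB)
      apply Real.sqrt_le_sqrt
      calc (1-κ^2)*(1-x) ≤ (1-κ^2*x^2)*(1-x^2) := by
            apply mul_le_mul (by nlinarith [sq_nonneg κ]) (by nlinarith) h1x (by nlinarith)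
        _ = (1-x^2)*(1-κ^2*x^2) := by ring

lemma K_pos {κ : ℝ} (hκ : κ ^ 2 < 1) : 0 < K κ := by
  apply intervalIntegral.intervalIntegral_pos_of_pos_on (ell_integrable hκ)
    _ one_pos
  intro x hx
  obtain ⟨hx0, hx1⟩ := hx
  have hA : (0:ℝ) < 1 - x ^ 2 := by nlinarith
  have hB : (0:ℝ) < 1 - κ ^ 2 * x ^ 2 := by nlinarith [mul_nonneg (sq_nonneg κ) hA.le]
  have : (0:ℝ) < (1 - x ^ 2) * (1 - κ ^ 2 * x ^ 2) := mul_pos hA hB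
  positivity

lemma K_lt_K {κ κ' : ℝ} (h0 : 0 ≤ κ) (h : κ < κ') (h1 : κ' < 1) : K κ < K κ' := by
  have hκ2 : κ ^ 2 < 1 := by nlinarith
  have hκ'2 : κ' ^ 2 < 1 := by nlinarith
  have hi := ell_integrable hκ2
  have hi' := ell_integrable hκ'2
  have key : 0 < K κ' - K κ := by
    rw [K, K, ← intervalIntegral.integral_sub hi' hi]
    apply intervalIntegral.intervalIntegral_pos_of_pos_on (hi'.sub hi) _ one_pos
    intro x hx
    obtain ⟨hx0, hx1⟩ := hx
    have hA : (0:ℝ) < 1 - x ^ 2 := by nlinarith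
    have hB' : (0:ℝ) < 1 - κ' ^ 2 * x ^ 2 := by nlinarith [mul_nonneg (sq_nonneg κ') hA.le]
    have hlt : (1 - x ^ 2) * (1 - κ' ^ 2 * x ^ 2) < (1 - x ^ 2) * (1 - κ ^ 2 * x ^ 2) := by
      apply mul_lt_mul_of_pos_left _ hA
      have : κ ^ 2 < κ' ^ 2 := by nlinarith
      nlinarith [sq_nonneg x, mul_pos hx0 hx0]
    have hs : 0 < Real.sqrt ((1 - x ^ 2) * (1 - κ' ^ 2 * x ^ 2)) :=
      Real.sqrt_pos.mpr (by positivity)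
    have := one_div_lt_one_div_of_lt (Real.sqrt_pos.mpr (mul_pos hA hB'))
      (Real.sqrt_lt_sqrt (by positivity) hlt)
    simp only [sub_pos]
    linarith [this]
  linarith

/-- For fixed `β ∈ [0,1)`, `A₁ ↦ T₁(β,A₁)` is strictly increasing and
`A₁ ↦ T₂(β,A₁)` is strictly decreasing on `(0, 1/(1+β))`. -/
theorem T₁_strictMonoOn_T₂_strictAntiOn (a : ℝ) (ha : 0 < a)
    (β : ℝ) (hβ : β ∈ Set.Ico (0:ℝ) 1) :
    StrictMonoOn (fun A₁ => T₁ a β A₁) (Set.Ioo 0 (1 / (1 + β))) ∧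
    StrictAntiOn (fun A₁ => T₂ a β A₁) (Set.Ioo 0 (1 / (1 + β))) := by
  obtain ⟨hβ0, hβ1⟩ := hβ
  have h1β : (0:ℝ) < 1 + β := by linarith
  -- basic facts for z in the interval
  have hmem : ∀ z ∈ Set.Ioo (0:ℝ) (1 / (1 + β)), 0 < z ∧ z * (1 + β) < 1 := by
    intro z hz
    exact ⟨hz.1, (lt_div_iff₀ h1β).mp hz.2⟩
  have hspos : ∀ z ∈ Set.Ioo (0:ℝ) (1 / (1 + β)), 0 < 1 - 4 * β * z ^ 2 := by
    intro z hz
    obtain ⟨hz0, hz1⟩ := hmem z hz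
    have h2 : (z * (1 + β)) ^ 2 < 1 := by nlinarith [mul_pos hz0 h1β]
    nlinarith [mul_nonneg (sq_nonneg z) (sq_nonneg (1 - β))]
  -- κ₁ bounds
  have hκ₁lt1 : ∀ z ∈ Set.Ioo (0:ℝ) (1 / (1 + β)), κ₁ β z < 1 := by
    intro z hz
    obtain ⟨hz0, hz1⟩ := hmem z hz
    have hs := hspos z hz
    have hsq : 0 < Real.sqrt (1 - 4 * β * z ^ 2) := Real.sqrt_pos.mpr hs
    rw [κ₁, Real.sqrt_lt' one_pos, one_pow]
    rw [div_lt_one (by positivity)]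
    have : z * (1 - β) < Real.sqrt (1 - 4 * β * z ^ 2) := by
      rw [Real.lt_sqrt (by nlinarith)]
      nlinarith [mul_pos hz0 h1β, sq_nonneg z]
    linarith
  have hκ₁mono : ∀ x ∈ Set.Ioo (0:ℝ) (1 / (1 + β)), ∀ y ∈ Set.Ioo (0:ℝ) (1 / (1 + β)),
      x < y → κ₁ β x < κ₁ β y := by
    intro x hx y hy hxy
    obtain ⟨hx0, hx1⟩ := hmem x hx
    obtain ⟨hy0, hy1⟩ := hmem y hy
    have hsx := hspos x hx
    have hsy := hspos y hy
    set sx := Real.sqrt (1 - 4 * β * x ^ 2) with hsxdef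
    set sy := Real.sqrt (1 - 4 * β * y ^ 2) with hsydef
    have hsxp : 0 < sx := Real.sqrt_pos.mpr hsx
    have hsyp : 0 < sy := Real.sqrt_pos.mpr hsy
    have hsyx : sy ≤ sx := Real.sqrt_le_sqrt
      (by nlinarith [mul_nonneg hβ0 (by nlinarith : (0:ℝ) ≤ y ^ 2 - x ^ 2)])
    apply Real.sqrt_lt_sqrt
      (div_nonneg (by nlinarith [Real.sqrt_nonneg (1 - 4 * β * x ^ 2)]) (by positivity))
    rw [div_lt_div_iff₀ (by positivity) (by positivity)]
    have h1 : x * sy < y * sx := by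
      calc x * sy ≤ x * sx := by nlinarith
        _ < y * sx := by nlinarith
    nlinarith
  -- κ₂ bound
  have hκ₂sq : κ₂ β ^ 2 = β / (1 + β) := Real.sq_sqrt (by positivity)
  have hκ₂lt : κ₂ β ^ 2 < 1 := by
    rw [hκ₂sq, div_lt_one h1β]; linarith
  have hK₂pos : 0 < K (κ₂ β) := K_pos hκ₂lt
  constructor
  · -- T₁ strictly increasing
    intro x hx y hy hxy
    obtain ⟨hx0, hx1⟩ := hmem x hx
    obtain ⟨hy0, hy1⟩ := hmem y hy
    have hsx := hspos x hx
    have hsy := hspos y hy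
    have hCpos : 0 < 2 * Real.sqrt (2 / a) := by positivity
    have hPle : 2 * Real.sqrt (2 / a) / (1 - 4 * β * x ^ 2) ^ ((1:ℝ)/4)
        ≤ 2 * Real.sqrt (2 / a) / (1 - 4 * β * y ^ 2) ^ ((1:ℝ)/4) := by
      apply div_le_div_of_nonneg_left hCpos.le (Real.rpow_pos_of_pos hsy _)
      exact Real.rpow_le_rpow hsy.le
        (by nlinarith [mul_nonneg hβ0 (by nlinarith : (0:ℝ) ≤ y ^ 2 - x ^ 2)]) (by norm_num)
    have hPypos : 0 < 2 * Real.sqrt (2 / a) / (1 - 4 * β * y ^ 2) ^ ((1:ℝ)/4) := by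
      positivity
    have hκx1 : κ₁ β x < 1 := hκ₁lt1 x hx
    have hκy1 : κ₁ β y < 1 := hκ₁lt1 y hy
    have hKlt : K (κ₁ β x) < K (κ₁ β y) :=
      K_lt_K (Real.sqrt_nonneg _) (hκ₁mono x hx y hy hxy) hκy1
    have hKxpos : 0 < K (κ₁ β x) := by
      apply K_pos
      have h0 : 0 ≤ κ₁ β x := Real.sqrt_nonneg _
      nlinarith
    simp only [T₁]
    exact mul_lt_mul' hPle hKlt hKxpos.le hPypos
  · -- T₂ strictly decreasing
    intro x hx y hy hxy
    obtain ⟨hx0, hx1⟩ := hmem x hx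
    obtain ⟨hy0, hy1⟩ := hmem y hy
    simp only [T₂]
    apply mul_lt_mul_of_pos_right _ hK₂pos
    apply div_lt_div_of_pos_left two_pos (Real.sqrt_pos.mpr (by positivity))
    exact Real.sqrt_lt_sqrt (by positivity)
      (mul_lt_mul_of_pos_right (mul_lt_mul_of_pos_left hxy ha) h1β)
end

section
/- Let β ∈ (0,1) be fixed and for each positive rational q let Â₁(β,q) denote the unique A₁ ∈ (0, 1/(1+β)) with q·T₁(β,A₁) = T₂(β,A₁). Then Â₁(β,q) tends to 1/(1+β) as q tends to 0 from the right (along positive rationals), and Â₁(β,q) tends to 0 as q tends to +∞ (along positive rationals). -/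
open Real Filter Topology

/-!
Comparing the integrand of `K` with `1` and with `(1 - v)^(-1/2) / √(1 - κ²)` gives
`1 ≤ K κ ≤ 2 / √(1 - κ²)`. With `u = A₁(1 + β) < 1` one has `1 - κ₁² ≥ (1 - u)/2` and
`1 - u ≤ 1 - 4βA₁² ≤ 1`, hence
`2√(2/a) ≤ T₁ ≤ 8√(2/a)/(1 - u)²` and `2/√a ≤ T₂ ≤ 4/√(a A₁)`.
On a solution of `q T₁ = T₂` this forces `(1 - u)² ≤ 4√2 q` and `A₁ ≤ 2/q²`, and both limits
follow by squeezing.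
-/

open intervalIntegral MeasureTheory

section EllipticK

variable {κ : ℝ}

lemma one_le_K_integrand (hκ : κ ^ 2 ≤ 1) {v : ℝ} (hv : v ∈ Set.Ioo 0 1) :
    1 ≤ 1 / √((1 - v ^ 2) * (1 - κ ^ 2 * v ^ 2)) := by
  obtain ⟨hv0, hv1⟩ := hv
  have hv2 : v ^ 2 < 1 := by nlinarith
  have hκv : κ ^ 2 * v ^ 2 < 1 := by nlinarith
  have hpos : 0 < (1 - v ^ 2) * (1 - κ ^ 2 * v ^ 2) := by nlinarith
  have hle : (1 - v ^ 2) * (1 - κ ^ 2 * v ^ 2) ≤ 1 := by nlinarith [sq_nonneg v, sq_nonneg κ]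
  exact one_le_one_div (sqrt_pos.2 hpos) (sqrt_le_one.2 hle)

lemma K_integrand_le (hκ : κ ^ 2 < 1) {v : ℝ} (hv : v ∈ Set.Ico 0 1) :
    1 / √((1 - v ^ 2) * (1 - κ ^ 2 * v ^ 2)) ≤ (1 - v) ^ (-(1 / 2) : ℝ) / √(1 - κ ^ 2) := by
  obtain ⟨hv0, hv1⟩ := hv
  have hv2 : v ^ 2 ≤ 1 := pow_le_one₀ hv0 hv1.le
  have hκv : κ ^ 2 * v ^ 2 ≤ κ ^ 2 := mul_le_of_le_one_right (sq_nonneg κ) hv2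
  have hprod : (1 - v) * (1 - κ ^ 2) ≤ (1 - v ^ 2) * (1 - κ ^ 2 * v ^ 2) :=
    mul_le_mul (by nlinarith) (by linarith) (by linarith) (by linarith)
  calc 1 / √((1 - v ^ 2) * (1 - κ ^ 2 * v ^ 2))
      ≤ 1 / √((1 - v) * (1 - κ ^ 2)) :=
        one_div_le_one_div_of_le (sqrt_pos.2 (by nlinarith)) (sqrt_le_sqrt hprod)
    _ = (1 - v) ^ (-(1 / 2) : ℝ) / √(1 - κ ^ 2) := by
        rw [rpow_neg (by linarith), ← sqrt_eq_rpow, sqrt_mul (by linarith)]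
        field_simp

lemma intervalIntegrable_one_sub_rpow_neg_half :
    IntervalIntegrable (fun v : ℝ => (1 - v) ^ (-(1 / 2) : ℝ)) volume 0 1 := by
  have hrpow : IntervalIntegrable (fun u : ℝ => u ^ (-(1 / 2) : ℝ)) volume 0 1 :=
    intervalIntegrable_rpow' (by norm_num)
  simpa using (hrpow.comp_sub_left 1).symm

lemma integral_one_sub_rpow_neg_half : ∫ v in (0:ℝ)..1, (1 - v) ^ (-(1 / 2) : ℝ) = 2 := by
  rw [integral_comp_sub_left (fun u : ℝ => u ^ (-(1 / 2) : ℝ)), integral_rpow (by norm_num)]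
  norm_num

lemma intervalIntegrable_K_integrand (hκ : κ ^ 2 < 1) :
    IntervalIntegrable (fun v => 1 / √((1 - v ^ 2) * (1 - κ ^ 2 * v ^ 2))) volume 0 1 := by
  refine (intervalIntegrable_one_sub_rpow_neg_half.div_const (√(1 - κ ^ 2))).mono_fun
    (Measurable.aestronglyMeasurable (by fun_prop)) ?_
  rw [Set.uIoc_of_le zero_le_one, ← Measure.restrict_congr_set Ioo_ae_eq_Ioc]
  refine ae_restrict_of_forall_mem measurableSet_Ioo fun v hv => ?_
  have h := K_integrand_le hκ (Set.Ioo_subset_Ico_self hv)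
  dsimp only
  rw [norm_of_nonneg (by positivity), norm_of_nonneg (le_trans (by positivity) h)]
  exact h

lemma one_le_K (hκ : κ ^ 2 < 1) : 1 ≤ K κ := by
  calc (1 : ℝ) = ∫ _ in (0:ℝ)..1, (1 : ℝ) := by simp
    _ ≤ K κ := integral_mono_on_of_le_Ioo zero_le_one intervalIntegrable_const
        (intervalIntegrable_K_integrand hκ) fun v hv => one_le_K_integrand hκ.le hv

lemma K_le (hκ : κ ^ 2 < 1) : K κ ≤ 2 / √(1 - κ ^ 2) := by
  calc K κ ≤ ∫ v in (0:ℝ)..1, (1 - v) ^ (-(1 / 2) : ℝ) / √(1 - κ ^ 2) :=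
        integral_mono_on_of_le_Ioo zero_le_one (intervalIntegrable_K_integrand hκ)
          (intervalIntegrable_one_sub_rpow_neg_half.div_const _)
          fun v hv => K_integrand_le hκ (Set.Ioo_subset_Ico_self hv)
    _ = 2 / √(1 - κ ^ 2) := by
        rw [intervalIntegral.integral_div, integral_one_sub_rpow_neg_half]

end EllipticK

section Periods

variable {a β A : ℝ}

lemma four_mul_mul_sq_le (β A : ℝ) : 4 * β * A ^ 2 ≤ (A * (1 + β)) ^ 2 := by
  nlinarith [sq_nonneg (A * (1 - β))]

lemma one_sub_κ₂_sq (hβ : 0 ≤ β) : 1 - κ₂ β ^ 2 = 1 / (1 + β) := by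
  rw [κ₂, sq_sqrt (by positivity)]
  field_simp
  ring

lemma K_κ₂_bounds (hβ : 0 ≤ β) : 1 ≤ K (κ₂ β) ∧ K (κ₂ β) ≤ 2 * √(1 + β) := by
  have hκ : κ₂ β ^ 2 < 1 := by
    linarith [one_sub_κ₂_sq hβ, (by positivity : (0:ℝ) < 1 / (1 + β))]
  refine ⟨one_le_K hκ, (K_le hκ).trans_eq ?_⟩
  rw [one_sub_κ₂_sq hβ, sqrt_div' _ (by positivity : (0:ℝ) ≤ 1 + β)]
  simp

lemma one_sub_mul_div_two_le_one_sub_κ₁_sq (hβ : 0 ≤ β) (hA : 0 < A)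
    (hAβ : A * (1 + β) < 1) :
    (1 - A * (1 + β)) / 2 ≤ 1 - κ₁ β A ^ 2 := by
  have hu : 0 < A * (1 + β) := by positivity
  have hdisc := four_mul_mul_sq_le β A
  set s := √(1 - 4 * β * A ^ 2)
  have hs_sq : s ^ 2 = 1 - 4 * β * A ^ 2 := sq_sqrt (by nlinarith)
  have hs0 : 0 < s := sqrt_pos.2 (by nlinarith)
  have hs1 : s ≤ 1 := sqrt_le_one.2 (by nlinarith)
  have hprod :
      (s - A * (1 - β)) * (s + A * (1 - β)) = (1 - A * (1 + β)) * (1 + A * (1 + β)) := by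
    linear_combination hs_sq
  have hsum_le : s + A * (1 - β) ≤ 1 + A * (1 + β) := by nlinarith
  have hsum_pos : 0 < s + A * (1 - β) := by nlinarith
  have hgap : 1 - A * (1 + β) ≤ s - A * (1 - β) := by nlinarith
  have hκ : κ₁ β A ^ 2 = (A * (1 - β) + s) / (2 * s) :=
    sq_sqrt (div_nonneg (by linarith) (by positivity))
  rw [hκ, one_sub_div (by positivity), le_div_iff₀ (by positivity)]
  nlinarith

lemma two_mul_sqrt_le_T₁ (hβ : 0 ≤ β) (hA : 0 < A) (hAβ : A * (1 + β) < 1) :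
    2 * √(2 / a) ≤ T₁ a β A := by
  have hx : 0 < 1 - 4 * β * A ^ 2 := by nlinarith [four_mul_mul_sq_le β A]
  have hκ : κ₁ β A ^ 2 < 1 := by linarith [one_sub_mul_div_two_le_one_sub_κ₁_sq hβ hA hAβ]
  have hx_rpow : (1 - 4 * β * A ^ 2) ^ (1 / 4 : ℝ) ≤ 1 :=
    rpow_le_one hx.le (by nlinarith [sq_nonneg A]) (by norm_num)
  calc 2 * √(2 / a) = 2 * √(2 / a) / 1 * 1 := by simp
    _ ≤ T₁ a β A :=
      mul_le_mul (div_le_div_of_nonneg_left (by positivity) (rpow_pos_of_pos hx _) hx_rpow)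
        (one_le_K hκ) zero_le_one (by positivity)

lemma T₁_le (hβ : 0 ≤ β) (hA : 0 < A) (hAβ : A * (1 + β) < 1) :
    T₁ a β A ≤ 8 * √(2 / a) / (1 - A * (1 + β)) ^ 2 := by
  have hu : 0 < 1 - A * (1 + β) := by linarith
  have hx : 1 - A * (1 + β) ≤ 1 - 4 * β * A ^ 2 := by
    nlinarith [four_mul_mul_sq_le β A, mul_pos hA (by linarith : (0:ℝ) < 1 + β)]
  have hx_rpow : 1 - 4 * β * A ^ 2 ≤ (1 - 4 * β * A ^ 2) ^ (1 / 4 : ℝ) :=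
    self_le_rpow_of_le_one (by linarith) (by nlinarith [sq_nonneg A]) (by norm_num)
  have hκ := one_sub_mul_div_two_le_one_sub_κ₁_sq hβ hA hAβ
  have hK : K (κ₁ β A) ≤ 4 / (1 - A * (1 + β)) := calc
    K (κ₁ β A) ≤ 2 / √(1 - κ₁ β A ^ 2) := K_le (by linarith)
    _ ≤ 2 / √(((1 - A * (1 + β)) / 2) ^ 2) :=
      div_le_div_of_nonneg_left zero_le_two (by positivity) (sqrt_le_sqrt (by nlinarith))
    _ = 4 / (1 - A * (1 + β)) := by rw [sqrt_sq (by positivity)]; field_simp; norm_num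
  calc T₁ a β A ≤ 2 * √(2 / a) / (1 - A * (1 + β)) * (4 / (1 - A * (1 + β))) :=
        mul_le_mul (div_le_div_of_nonneg_left (by positivity) hu (hx.trans hx_rpow)) hK
          (le_trans zero_le_one (one_le_K (by linarith))) (by positivity)
    _ = 8 * √(2 / a) / (1 - A * (1 + β)) ^ 2 := by field_simp; ring

lemma two_div_sqrt_le_T₂ (ha : 0 < a) (hβ : 0 ≤ β) (hA : 0 < A) (hAβ : A * (1 + β) < 1) :
    2 / √a ≤ T₂ a β A := by
  calc 2 / √a = 2 / √a * 1 := (mul_one _).symm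
    _ ≤ T₂ a β A :=
      mul_le_mul (div_le_div_of_nonneg_left zero_le_two (sqrt_pos.2 (by positivity))
          (sqrt_le_sqrt (by nlinarith))) (K_κ₂_bounds hβ).1 zero_le_one (by positivity)

lemma T₂_le (hβ : 0 ≤ β) : T₂ a β A ≤ 4 / √(a * A) := by
  calc T₂ a β A ≤ 2 / (√(a * A) * √(1 + β)) * (2 * √(1 + β)) := by
        rw [T₂, sqrt_mul' _ (by linarith : (0:ℝ) ≤ 1 + β)]
        exact mul_le_mul_of_nonneg_left (K_κ₂_bounds hβ).2 (by positivity)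
    _ = 4 / √(a * A) := by field_simp; ring

end Periods

section Solutions

variable {a β A q : ℝ}

lemma sq_one_sub_mul_le_of_mul_T₁_eq_T₂ (ha : 0 < a) (hβ : 0 ≤ β)
    (hA : A ∈ Set.Ioo 0 (1 / (1 + β))) (hq : 0 ≤ q) (h : q * T₁ a β A = T₂ a β A) :
    (1 - A * (1 + β)) ^ 2 ≤ 4 * √2 * q := by
  have hAβ : A * (1 + β) < 1 := (lt_div_iff₀ (by linarith)).1 hA.2
  have hperiod : 2 / √a ≤ q * (8 * √(2 / a) / (1 - A * (1 + β)) ^ 2) :=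
    (two_div_sqrt_le_T₂ ha hβ hA.1 hAβ).trans
      (h ▸ mul_le_mul_of_nonneg_left (T₁_le hβ hA.1 hAβ) hq)
  have hsqrt : √(2 / a) * √a = √2 := by
    rw [← sqrt_mul (by positivity), div_mul_cancel₀ _ ha.ne']
  rw [mul_div_assoc', div_le_div_iff₀ (sqrt_pos.2 ha) (by positivity)] at hperiod
  nlinarith

lemma le_two_div_sq_of_mul_T₁_eq_T₂ (ha : 0 < a) (hβ : 0 ≤ β)
    (hA : A ∈ Set.Ioo 0 (1 / (1 + β))) (hq : 0 < q) (h : q * T₁ a β A = T₂ a β A) :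
    A ≤ 2 / q ^ 2 := by
  have hAβ : A * (1 + β) < 1 := (lt_div_iff₀ (by linarith)).1 hA.2
  have hperiod : q * (2 * √(2 / a)) ≤ 4 / √(a * A) :=
    (mul_le_mul_of_nonneg_left (two_mul_sqrt_le_T₁ hβ hA.1 hAβ) hq.le).trans (h ▸ T₂_le hβ)
  have hsqrt : √(2 / a) * √(a * A) = √(2 * A) := by
    rw [← sqrt_mul (by positivity)]
    field_simp
  rw [le_div_iff₀ (sqrt_pos.2 (by nlinarith [hA.1])), mul_assoc, mul_assoc, hsqrt] at hperiod
  have hsq := pow_le_pow_left₀ (by positivity) (by linarith : q * √(2 * A) ≤ 2) 2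
  rw [mul_pow, sq_sqrt (by linarith [hA.1])] at hsq
  rw [le_div_iff₀ (by positivity)]
  linarith

end Solutions

section Limits

variable {a β : ℝ} {Ahat : ℚ → ℝ}

lemma tendsto_nhdsGT_of_mul_T₁_eq_T₂ (ha : 0 < a) (hβ : 0 ≤ β)
    (hAhat : ∀ q : ℚ, 0 < q →
      Ahat q ∈ Set.Ioo 0 (1 / (1 + β)) ∧ (q : ℝ) * T₁ a β (Ahat q) = T₂ a β (Ahat q)) :
    Tendsto Ahat (𝓝[>] 0) (𝓝 (1 / (1 + β))) := by
  have hgap : Tendsto (fun q : ℚ => 1 - Ahat q * (1 + β)) (𝓝[>] 0) (𝓝 0) := by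
    refine squeeze_zero' ?_ ?_ (g := fun q : ℚ => √(4 * √2 * q)) ?_
    · filter_upwards [eventually_mem_nhdsWithin] with q hq
      have := (lt_div_iff₀ (by linarith)).1 (hAhat q hq).1.2
      linarith
    · filter_upwards [eventually_mem_nhdsWithin] with q (hq : 0 < q)
      obtain ⟨hA, h⟩ := hAhat q hq
      exact (le_abs_self _).trans (abs_le_sqrt
        (sq_one_sub_mul_le_of_mul_T₁_eq_T₂ ha hβ hA (by exact_mod_cast hq.le) h))
    · refine tendsto_nhdsWithin_of_tendsto_nhds ?_
      simpa using (show Continuous fun q : ℚ => √(4 * √2 * q) by fun_prop).tendsto 0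
  have hlim := (hgap.const_sub 1).div_const (1 + β)
  rw [sub_zero] at hlim
  refine hlim.congr fun q => ?_
  field_simp
  ring

lemma tendsto_atTop_of_mul_T₁_eq_T₂ (ha : 0 < a) (hβ : 0 ≤ β)
    (hAhat : ∀ q : ℚ, 0 < q →
      Ahat q ∈ Set.Ioo 0 (1 / (1 + β)) ∧ (q : ℝ) * T₁ a β (Ahat q) = T₂ a β (Ahat q)) :
    Tendsto Ahat atTop (𝓝 0) := by
  refine squeeze_zero' ?_ ?_ (g := fun q : ℚ => 2 / (q : ℝ) ^ 2) ?_
  · filter_upwards [eventually_gt_atTop 0] with q hq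
    exact (hAhat q hq).1.1.le
  · filter_upwards [eventually_gt_atTop 0] with q hq
    obtain ⟨hA, h⟩ := hAhat q hq
    exact le_two_div_sq_of_mul_T₁_eq_T₂ ha hβ hA (by exact_mod_cast hq) h
  · exact tendsto_const_nhds.div_atTop
      ((tendsto_pow_atTop two_ne_zero).comp (tendsto_ratCast_atTop_iff.mpr tendsto_id))

end Limits

/-- Let `Ahat q = Ahat₁(β,q)` be the implicit solution of `q T₁(β,·) = T₂(β,·)` for
positive rationals `q`. Then `Ahat q → 1/(1+β)` as `q → 0⁺` and `Ahat q → 0` as `q → +∞`. -/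
theorem A₁_limits_in_q (a : ℝ) (ha : 0 < a) (β : ℝ) (hβ : β ∈ Set.Ioo (0:ℝ) 1)
    (Ahat : ℚ → ℝ)
    (hAhat : ∀ q : ℚ, 0 < q →
      Ahat q ∈ Set.Ioo 0 (1 / (1 + β)) ∧ (q : ℝ) * T₁ a β (Ahat q) = T₂ a β (Ahat q)) :
    Tendsto Ahat (𝓝[>] (0:ℚ)) (𝓝 (1 / (1 + β))) ∧ Tendsto Ahat atTop (𝓝 0) :=
  ⟨tendsto_nhdsGT_of_mul_T₁_eq_T₂ ha hβ.1.le hAhat, tendsto_atTop_of_mul_T₁_eq_T₂ ha hβ.1.le hAhat⟩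
end

section
/- At β = 0 one has the explicit formulas T₁(0,A₁) = 2√(2/a)·K(√((A₁+1)/2)) for A₁ ∈ (0,1) and T₂(0,A₁) = π/√(a·A₁) for A₁ ∈ (0,1); moreover, for each positive rational q there exists a unique value Â₁(0,q) ∈ (0,1) such that q·T₁(0,Â₁(0,q)) = T₂(0,Â₁(0,q)). -/
open Real Filter Topology

/-! At `β = 0` the modulus `κ₂` vanishes and `κ₁ = √((A₁ + 1) / 2)`; since `K 0 = π / 2` (the
integrand is the derivative of `arcsin`), this gives both period formulas. The condition
`q T₁ = T₂` then reads `√A₁ · K(√((A₁ + 1) / 2)) = π / (2√2 q)`. The left-hand side vanishes at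
`A₁ = 0`, is continuous and strictly increasing on `[0, 1)` because `K` is (dominated convergence,
and monotonicity of the integrand in `κ²`), and tends to `∞` as `A₁ → 1` because
`K κ ≥ -log (1 - κ) / 2`; so it takes every positive value exactly once. -/

open MeasureTheory Set intervalIntegral
open scoped Interval

noncomputable def kIntegrand (κ v : ℝ) : ℝ :=
  1 / √((1 - v ^ 2) * (1 - κ ^ 2 * v ^ 2))

lemma K_eq_integral_kIntegrand (κ : ℝ) : K κ = ∫ v in (0:ℝ)..1, kIntegrand κ v := rfl

lemma kIntegrand_nonneg (κ v : ℝ) : 0 ≤ kIntegrand κ v := by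
  unfold kIntegrand; positivity

lemma measurable_kIntegrand (κ : ℝ) : Measurable (kIntegrand κ) := by
  unfold kIntegrand; fun_prop

lemma ae_mem_uIoc_imp_of_forall_Ioo {a b : ℝ} (hab : a ≤ b) {p : ℝ → Prop}
    (h : ∀ t ∈ Ioo a b, p t) : ∀ᵐ t, t ∈ Ι a b → p t := by
  filter_upwards [compl_mem_ae_iff.2 (measure_singleton b)] with t hb ht
  rw [uIoc_of_le hab] at ht
  exact h t ⟨ht.1, lt_of_le_of_ne ht.2 hb⟩

lemma hasDerivAt_arcsin_kIntegrand_zero {v : ℝ} (hv : v ∈ Ioo (-1 : ℝ) 1) :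
    HasDerivAt arcsin (kIntegrand 0 v) v := by
  simpa [kIntegrand] using hasDerivAt_arcsin hv.1.ne' hv.2.ne

lemma intervalIntegrable_kIntegrand_zero : IntervalIntegrable (kIntegrand 0) volume 0 1 :=
  (intervalIntegrable_iff_integrableOn_Ioc_of_le zero_le_one).2 <|
    intervalIntegral.integrableOn_deriv_of_nonneg continuous_arcsin.continuousOn
      (fun v hv => hasDerivAt_arcsin_kIntegrand_zero ⟨by linarith [hv.1], hv.2⟩)
      (fun v _ => kIntegrand_nonneg 0 v)

theorem K_zero : K 0 = π / 2 := by
  have h := intervalIntegral.integral_eq_sub_of_hasDerivAt_of_le zero_le_one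
    continuous_arcsin.continuousOn
    (fun v hv => hasDerivAt_arcsin_kIntegrand_zero ⟨by linarith [hv.1], hv.2⟩)
    intervalIntegrable_kIntegrand_zero
  rw [arcsin_one, arcsin_zero, sub_zero] at h
  exact h

theorem K_nonneg (κ : ℝ) : 0 ≤ K κ :=
  intervalIntegral.integral_nonneg zero_le_one fun v _ => kIntegrand_nonneg κ v

lemma kIntegrand_le_mul_kIntegrand_zero {κ v : ℝ} (hκ : κ ^ 2 < 1) (hv : v ^ 2 < 1) :
    kIntegrand κ v ≤ (√(1 - κ ^ 2))⁻¹ * kIntegrand 0 v := by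
  have hκv : 1 - κ ^ 2 ≤ 1 - κ ^ 2 * v ^ 2 := by nlinarith
  simp only [kIntegrand, zero_pow two_ne_zero, zero_mul, sub_zero, mul_one,
    sqrt_mul (by linarith : (0:ℝ) ≤ 1 - v ^ 2)]
  rw [← one_div, div_mul_div_comm, one_mul, mul_comm (√(1 - κ ^ 2))]
  gcongr

theorem intervalIntegrable_kIntegrand {κ : ℝ} (hκ : κ ^ 2 < 1) :
    IntervalIntegrable (kIntegrand κ) volume 0 1 := by
  refine (intervalIntegrable_kIntegrand_zero.const_mul (√(1 - κ ^ 2))⁻¹).mono_fun'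
    (measurable_kIntegrand κ).aestronglyMeasurable ?_
  refine (ae_restrict_iff' measurableSet_uIoc).2 <| ae_mem_uIoc_imp_of_forall_Ioo zero_le_one
    fun v hv => ?_
  dsimp only
  rw [norm_of_nonneg (kIntegrand_nonneg κ v)]
  exact kIntegrand_le_mul_kIntegrand_zero hκ (by nlinarith [hv.1, hv.2])

lemma kIntegrand_le_kIntegrand {κ κ' v : ℝ} (h : κ ^ 2 ≤ κ' ^ 2) (h' : κ' ^ 2 ≤ 1)
    (hv : v ^ 2 < 1) : kIntegrand κ v ≤ kIntegrand κ' v := by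
  have hpos : 0 < (1 - v ^ 2) * (1 - κ' ^ 2 * v ^ 2) := by
    apply mul_pos <;> nlinarith
  unfold kIntegrand
  gcongr 1 / √?_
  nlinarith [mul_nonneg (by nlinarith : (0:ℝ) ≤ 1 - v ^ 2)
    (mul_nonneg (sub_nonneg.2 h) (sq_nonneg v))]

lemma kIntegrand_lt_kIntegrand {κ κ' v : ℝ} (h : κ ^ 2 < κ' ^ 2) (h' : κ' ^ 2 ≤ 1)
    (hv : v ∈ Ioo (0 : ℝ) 1) : kIntegrand κ v < kIntegrand κ' v := by
  obtain ⟨hv0, hv1⟩ := hv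
  have hpos : 0 < (1 - v ^ 2) * (1 - κ' ^ 2 * v ^ 2) := by
    apply mul_pos <;> nlinarith
  unfold kIntegrand
  gcongr 1 / √?_
  nlinarith [mul_pos (by nlinarith : (0:ℝ) < 1 - v ^ 2)
    (mul_pos (sub_pos.2 h) (pow_pos hv0 2))]

theorem strictMonoOn_K : StrictMonoOn K (Ico 0 1) := by
  intro κ hκ κ' hκ' hlt
  have hsq : κ ^ 2 < κ' ^ 2 := by nlinarith [hκ.1]
  have hsq' : κ' ^ 2 < 1 := by nlinarith [hκ'.1, hκ'.2]
  have hi := intervalIntegrable_kIntegrand (hsq.trans hsq')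
  have hi' := intervalIntegrable_kIntegrand hsq'
  rw [← sub_pos, K_eq_integral_kIntegrand, K_eq_integral_kIntegrand, ← integral_sub hi' hi]
  exact intervalIntegral_pos_of_pos_on (hi'.sub hi)
    (fun v hv => sub_pos.2 (kIntegrand_lt_kIntegrand hsq hsq'.le hv)) zero_lt_one

lemma continuousAt_kIntegrand {κ v : ℝ} (hκ : κ ^ 2 ≤ 1) (hv : v ^ 2 < 1) :
    ContinuousAt (fun κ => kIntegrand κ v) κ := by
  have hpos : 0 < (1 - v ^ 2) * (1 - κ ^ 2 * v ^ 2) := by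
    apply mul_pos <;> nlinarith
  unfold kIntegrand
  exact continuousAt_const.div (by fun_prop) (sqrt_pos.2 hpos).ne'

theorem continuousOn_K : ContinuousOn K (Ioo (-1) 1) := by
  intro κ₀ hκ₀
  have hκ₀1 : |κ₀| < 1 := abs_lt.2 hκ₀
  obtain ⟨c, hκ₀c, hc1⟩ := exists_between hκ₀1
  have hc : c ^ 2 < 1 :=
    (sq_lt_one_iff_abs_lt_one c).2 (by rwa [abs_of_pos ((abs_nonneg κ₀).trans_lt hκ₀c)])
  refine (continuousAt_of_dominated_interval (bound := kIntegrand c)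
    (Eventually.of_forall fun κ => (measurable_kIntegrand κ).aestronglyMeasurable) ?_
    (intervalIntegrable_kIntegrand hc) ?_).continuousWithinAt
  · filter_upwards [Ioo_mem_nhds (neg_lt_of_abs_lt hκ₀c) (lt_of_abs_lt hκ₀c)] with κ hκ
    refine ae_mem_uIoc_imp_of_forall_Ioo zero_le_one fun v hv => ?_
    rw [norm_of_nonneg (kIntegrand_nonneg κ v)]
    exact kIntegrand_le_kIntegrand (sq_le_sq' hκ.1.le hκ.2.le) hc.le (by nlinarith [hv.1, hv.2])
  · exact ae_mem_uIoc_imp_of_forall_Ioo zero_le_one fun v hv =>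
      continuousAt_kIntegrand ((sq_lt_one_iff_abs_lt_one κ₀).2 hκ₀1).le
        (by nlinarith [hv.1, hv.2])

lemma integral_inv_one_sub_mul {κ : ℝ} (h0 : 0 < κ) (h1 : κ < 1) :
    ∫ v in (0:ℝ)..1, (1 - κ * v)⁻¹ = -log (1 - κ) / κ := by
  rw [integral_comp_sub_mul (fun x => x⁻¹) h0.ne', integral_inv_of_pos (by linarith) (by norm_num)]
  simp [log_inv, div_eq_inv_mul]

lemma inv_one_sub_mul_le_two_mul_kIntegrand {κ v : ℝ} (hκ : κ ∈ Icc (0:ℝ) 1)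
    (hv : v ∈ Ico (0:ℝ) 1) : (1 - κ * v)⁻¹ ≤ 2 * kIntegrand κ v := by
  obtain ⟨hκ0, hκ1⟩ := hκ
  obtain ⟨hv0, hv1⟩ := hv
  have hκv : κ * v ≤ v := mul_le_of_le_one_left hv0 hκ1
  have hκv0 : 0 ≤ κ * v := mul_nonneg hκ0 hv0
  have hκv1 : 0 < 1 - κ ^ 2 * v ^ 2 := by nlinarith
  have hsq : (1 - v ^ 2) * (1 - κ ^ 2 * v ^ 2) ≤ (2 * (1 - κ * v)) ^ 2 := by
    have e1 : 1 - v ^ 2 ≤ 2 * (1 - κ * v) := by nlinarith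
    have e2 : 1 - κ ^ 2 * v ^ 2 ≤ 2 * (1 - κ * v) := by nlinarith
    nlinarith [mul_le_mul e1 e2 hκv1.le (by linarith)]
  have hpos : 0 < (1 - v ^ 2) * (1 - κ ^ 2 * v ^ 2) := mul_pos (by nlinarith) hκv1
  have hsqrt : √((1 - v ^ 2) * (1 - κ ^ 2 * v ^ 2)) ≤ 2 * (1 - κ * v) :=
    (sqrt_le_sqrt hsq).trans_eq (sqrt_sq (by linarith))
  calc (1 - κ * v)⁻¹ = 2 / (2 * (1 - κ * v)) := by field_simp
    _ ≤ 2 / √((1 - v ^ 2) * (1 - κ ^ 2 * v ^ 2)) := by gcongr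
    _ = 2 * kIntegrand κ v := by rw [kIntegrand, mul_one_div]

theorem neg_log_one_sub_div_two_le_K {κ : ℝ} (h0 : 0 < κ) (h1 : κ < 1) :
    -log (1 - κ) / 2 ≤ K κ := by
  have hcont : ContinuousOn (fun v => (1 - κ * v)⁻¹) (uIcc 0 1) :=
    ContinuousOn.inv₀ (by fun_prop) fun v hv => by
      rw [uIcc_of_le zero_le_one] at hv; nlinarith [hv.1, hv.2]
  have hlog : 0 ≤ -log (1 - κ) := neg_nonneg.2 (log_nonpos (by linarith) (by linarith))
  calc -log (1 - κ) / 2 ≤ -log (1 - κ) / κ / 2 := by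
        gcongr; exact le_div_self hlog h0 h1.le
    _ = (∫ v in (0:ℝ)..1, (1 - κ * v)⁻¹) / 2 := by rw [integral_inv_one_sub_mul h0 h1]
    _ ≤ K κ := by
        rw [div_le_iff₀' two_pos, K_eq_integral_kIntegrand, ← intervalIntegral.integral_const_mul]
        refine integral_mono_on_of_le_Ioo zero_le_one hcont.intervalIntegrable
          ((intervalIntegrable_kIntegrand (by nlinarith)).const_mul 2) fun v hv =>
           inv_one_sub_mul_le_two_mul_kIntegrand ⟨h0.le, h1.le⟩ ⟨hv.1.le, hv.2⟩

theorem tendsto_K_nhdsLT_one : Tendsto K (𝓝[<] 1) atTop := by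
  have hsub : Tendsto (fun κ : ℝ => 1 - κ) (𝓝[<] 1) (𝓝[>] 0) := by
    refine tendsto_nhdsWithin_of_tendsto_nhds_of_eventually_within _ ?_ ?_
    · have h : Continuous fun κ : ℝ => 1 - κ := by fun_prop
      simpa using (h.tendsto 1).mono_left nhdsWithin_le_nhds
    · filter_upwards [self_mem_nhdsWithin] with κ hκ
      exact sub_pos.2 (show κ < 1 from hκ)
  have hlog : Tendsto (fun κ => -log (1 - κ) / 2) (𝓝[<] 1) atTop :=
    (tendsto_neg_atBot_atTop.comp (tendsto_log_nhdsGT_zero.comp hsub)).atTop_div_const two_pos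
  refine tendsto_atTop_mono' _ ?_ hlog
  filter_upwards [Ioo_mem_nhdsLT (zero_lt_one' ℝ)] with κ hκ
  exact neg_log_one_sub_div_two_le_K hκ.1 hκ.2

noncomputable def sqrtMulK (A : ℝ) : ℝ := √A * K √((A + 1) / 2)

lemma sqrtMulK_zero : sqrtMulK 0 = 0 := by simp [sqrtMulK]

lemma sqrt_half_add_one_lt_one {A : ℝ} (hA : A < 1) : √((A + 1) / 2) < 1 :=
  (sqrt_lt' one_pos).2 (by linarith)

theorem continuousOn_sqrtMulK : ContinuousOn sqrtMulK (Iio 1) := by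
  intro A hA
  have hK : ContinuousAt K √((A + 1) / 2) := continuousOn_K.continuousAt <|
    Ioo_mem_nhds (by linarith [sqrt_nonneg ((A + 1) / 2)]) (sqrt_half_add_one_lt_one hA)
  have hκ : ContinuousAt (fun A : ℝ => √((A + 1) / 2)) A := by fun_prop
  exact (continuous_sqrt.continuousAt.mul
    (hK.comp (f := fun A : ℝ => √((A + 1) / 2)) hκ)).continuousWithinAt

theorem strictMonoOn_sqrtMulK : StrictMonoOn sqrtMulK (Ico 0 1) := by
  intro x hx y hy hxy
  have hκ {A : ℝ} (hA : A ∈ Ico (0:ℝ) 1) : √((A + 1) / 2) ∈ Ico (0:ℝ) 1 :=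
    ⟨sqrt_nonneg _, sqrt_half_add_one_lt_one hA.2⟩
  exact mul_lt_mul'' (sqrt_lt_sqrt hx.1 hxy)
    (strictMonoOn_K (hκ hx) (hκ hy) (sqrt_lt_sqrt (by linarith [hx.1]) (by linarith)))
    (sqrt_nonneg _) (K_nonneg _)

theorem tendsto_sqrtMulK_nhdsLT_one : Tendsto sqrtMulK (𝓝[<] 1) atTop := by
  have hsqrt : Tendsto (fun A : ℝ => √A) (𝓝[<] 1) (𝓝 1) := by
    simpa using (continuous_sqrt.tendsto 1).mono_left nhdsWithin_le_nhds
  have hκ : Tendsto (fun A : ℝ => √((A + 1) / 2)) (𝓝[<] 1) (𝓝[<] 1) := by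
    refine tendsto_nhdsWithin_of_tendsto_nhds_of_eventually_within _ ?_ ?_
    · have h : Continuous fun A : ℝ => √((A + 1) / 2) := by fun_prop
      simpa using (h.tendsto 1).mono_left nhdsWithin_le_nhds
    · filter_upwards [self_mem_nhdsWithin] with A hA using sqrt_half_add_one_lt_one hA
  exact hsqrt.pos_mul_atTop one_pos (tendsto_K_nhdsLT_one.comp hκ)

theorem existsUnique_sqrtMulK_eq {c : ℝ} (hc : 0 < c) :
    ∃! A, A ∈ Ioo (0:ℝ) 1 ∧ sqrtMulK A = c := by
  obtain ⟨b, hcb, hb⟩ := ((tendsto_sqrtMulK_nhdsLT_one.eventually_gt_atTop c).and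
    (Ioo_mem_nhdsLT one_pos)).exists
  obtain ⟨A, hA, hAc⟩ : c ∈ sqrtMulK '' Ioo 0 b :=
    intermediate_value_Ioo hb.1.le (continuousOn_sqrtMulK.mono fun x hx => hx.2.trans_lt hb.2)
      ⟨by rwa [sqrtMulK_zero], hcb⟩
  have hA1 : A ∈ Ioo (0:ℝ) 1 := ⟨hA.1, hA.2.trans hb.2⟩
  refine ⟨A, ⟨hA1, hAc⟩, fun B ⟨hB, hBc⟩ => ?_⟩
  exact strictMonoOn_sqrtMulK.injOn (Ioo_subset_Ico_self hB) (Ioo_subset_Ico_self hA1)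
    (hBc.trans hAc.symm)

theorem T₁_zero (a A : ℝ) : T₁ a 0 A = 2 * √(2 / a) * K √((A + 1) / 2) := by
  simp [T₁, κ₁]

theorem T₂_zero (a A : ℝ) : T₂ a 0 A = π / √(a * A) := by
  simp [T₂, κ₂, K_zero]

theorem mul_T₁_zero_eq_T₂_zero_iff {a A q : ℝ} (ha : 0 < a) (hA : 0 < A) (hq : q ≠ 0) :
    q * T₁ a 0 A = T₂ a 0 A ↔ sqrtMulK A = π / (2 * √2 * q) := by
  have hsqrt : √(2 / a) * √(a * A) = √2 * √A := by
    rw [← sqrt_mul (by positivity), ← sqrt_mul zero_le_two]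
    congr 1
    field_simp
  have hscale : q * (2 * √(2 / a) * K √((A + 1) / 2)) * √(a * A) =
      sqrtMulK A * (2 * √2 * q) := by
    rw [sqrtMulK]
    linear_combination (2 * q * K √((A + 1) / 2)) * hsqrt
  rw [T₁_zero, T₂_zero, eq_div_iff (sqrt_pos.2 (mul_pos ha hA)).ne', hscale,
    eq_div_iff (mul_ne_zero (by positivity) hq)]

/-- At `β = 0`: `T₁(0,A₁) = 2√(2/a) K(√((A₁+1)/2))`, `T₂(0,A₁) = π/√(aA₁)` for
`A₁ ∈ (0,1)`, and for each positive rational `q` there is a unique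
`Â₁(0,q) ∈ (0,1)` with `q T₁(0,Â₁(0,q)) = T₂(0,Â₁(0,q))`. -/
theorem beta_zero_formulas (a : ℝ) (ha : 0 < a) :
    (∀ A₁ ∈ Set.Ioo (0:ℝ) 1,
      T₁ a 0 A₁ = 2 * Real.sqrt (2 / a) * K (Real.sqrt ((A₁ + 1) / 2))) ∧
    (∀ A₁ ∈ Set.Ioo (0:ℝ) 1, T₂ a 0 A₁ = Real.pi / Real.sqrt (a * A₁)) ∧
    (∀ q : ℚ, 0 < q →
      ∃! A₁ : ℝ, A₁ ∈ Set.Ioo (0:ℝ) 1 ∧ (q : ℝ) * T₁ a 0 A₁ = T₂ a 0 A₁) := by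
  refine ⟨fun A₁ _ => T₁_zero a A₁, fun A₁ _ => T₂_zero a A₁, fun q hq => ?_⟩
  have hq₀ : (0 : ℝ) < q := Rat.cast_pos.2 hq
  refine (existsUnique_congr fun A₁ => and_congr_right fun hA₁ => ?_).2
    (existsUnique_sqrtMulK_eq (by positivity : 0 < π / (2 * √2 * q)))
  exact mul_T₁_zero_eq_T₂_zero_iff ha hA₁.1 hq₀.ne'
end

section
/- Fix a positive rational q, and for each β ∈ (0,1) let Â₁(β,q) denote the unique A₁ ∈ (0, 1/(1+β)) with q·T₁(β,A₁) = T₂(β,A₁). Then (1 + √(1 − 4β·Â₁(β,q)²))/(2β·Â₁(β,q)) tends to +∞ as β tends to 0 from the right. (Consequently the inversion point ξ₊(β) > 0 of the ξ-motion, defined by cosh ξ₊ = (1 + √(1−4βÂ₁²))/(2βÂ₁), tends to +∞ as β → 0⁺, so for any fixed point ξ₀ there is β₀ > 0 such that |ξ₀| < ξ₊(β) for all β ∈ (0,β₀).) -/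
open Real Filter Topology

/-!
Since `0 < Â₁ < 1/(1+β) ≤ 1`, dropping the square root gives
`cosh ξ₊ ≥ 1/(2βÂ₁) ≥ 1/(2β)`, and `1/(2β) → +∞` as `β → 0⁺`.
-/

lemma le_one_of_lt_one_div_one_add {β A : ℝ} (hβ : 0 ≤ β) (hA : A < 1 / (1 + β)) : A ≤ 1 :=
  hA.le.trans (div_le_one_of_le₀ (by linarith) (by linarith))

lemma inv_two_mul_le_one_add_sqrt_div {β A : ℝ} (hβ : 0 < β) (hA₀ : 0 < A) (hA₁ : A ≤ 1)
    (s : ℝ) : (2 * β)⁻¹ ≤ (1 + √s) / (2 * β * A) := by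
  rw [inv_eq_one_div]
  exact div_le_div₀ (by positivity) (le_add_of_nonneg_right (sqrt_nonneg s)) (by positivity)
    (mul_le_of_le_one_right (by positivity) hA₁)

lemma tendsto_inv_two_mul_nhdsGT_zero : Tendsto (fun β : ℝ => (2 * β)⁻¹) (𝓝[>] 0) atTop := by
  simpa only [mul_inv] using tendsto_inv_nhdsGT_zero.const_mul_atTop (by norm_num : (0:ℝ) < 2⁻¹)

theorem cosh_inversion_point_tendsto_atTop_general (a : ℝ) (q : ℚ)
    (Ahat : ℝ → ℝ)
    (hAhat : ∀ β ∈ Set.Ioo (0:ℝ) 1,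
      Ahat β ∈ Set.Ioo 0 (1 / (1 + β)) ∧ (q : ℝ) * T₁ a β (Ahat β) = T₂ a β (Ahat β)) :
    Tendsto (fun β => (1 + Real.sqrt (1 - 4 * β * Ahat β ^ 2)) / (2 * β * Ahat β))
      (𝓝[>] (0:ℝ)) atTop := by
  refine tendsto_atTop_mono' _ ?_ tendsto_inv_two_mul_nhdsGT_zero
  filter_upwards [Ioo_mem_nhdsGT one_pos] with β hβ
  obtain ⟨⟨hA₀, hA₁⟩, -⟩ := hAhat β hβ
  exact inv_two_mul_le_one_add_sqrt_div hβ.1 hA₀ (le_one_of_lt_one_div_one_add hβ.1.le hA₁) _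

/-- For the implicit solution `Ahat₁(β,q)` of `q T₁ = T₂`, the quantity
`(1 + √(1 - 4β Ahat₁²)) / (2β Ahat₁)` (i.e. `cosh ξ₊`) tends to `+∞` as `β → 0⁺`. -/
theorem cosh_inversion_point_tendsto_atTop (a : ℝ) (ha : 0 < a) (q : ℚ) (hq : 0 < q)
    (Ahat : ℝ → ℝ)
    (hAhat : ∀ β ∈ Set.Ioo (0:ℝ) 1,
      Ahat β ∈ Set.Ioo 0 (1 / (1 + β)) ∧ (q : ℝ) * T₁ a β (Ahat β) = T₂ a β (Ahat β)) :
    Tendsto (fun β => (1 + Real.sqrt (1 - 4 * β * Ahat β ^ 2)) / (2 * β * Ahat β))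
      (𝓝[>] (0:ℝ)) atTop :=
  cosh_inversion_point_tendsto_atTop_general a q Ahat hAhat
end

section
/- Fix a positive rational q and let Â : [0,1) → ℝ be a continuously differentiable function such that Â(β) ∈ (0, 1/(1+β)) and q·T₁(β,Â(β)) = T₂(β,Â(β)) for all β ∈ [0,1). Then there exists β₀ ∈ (0,1) such that the energy function E(β) = −2aβ·Â(β) is strictly decreasing on [0,β₀]; moreover E(0) = 0, so setting E₀ = −E(β₀) > 0, the map E is a strictly decreasing bijection from (0,β₀) onto (−E₀,0). -/
open Real Filter Topology

/-!
Since `E(β) = -2aβ Â(β)` vanishes at `0` and `E'(0) = -2a Â(0) < 0`, continuity of `E'` keeps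
`E' < 0` on some interval `[0, β₀]`; there `E` is strictly decreasing, and being continuous it maps
`(0, β₀)` onto `(E(β₀), E(0)) = (E(β₀), 0)` by the intermediate value theorem.
-/

open Set

theorem exists_strictAntiOn_Icc_of_derivWithin_neg {f : ℝ → ℝ} {a b : ℝ} (hab : a < b)
    (hf : ContDiffOn ℝ 1 f (Ico a b)) (hf' : derivWithin f (Ico a b) a < 0) :
    ∃ c ∈ Ioo a b, StrictAntiOn f (Icc a c) := by
  have hud : UniqueDiffOn ℝ (Ico a b) := uniqueDiffOn_Ico a b
  have ha : a ∈ Ico a b := left_mem_Ico.2 hab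
  have hneg : ∀ᶠ x in 𝓝[≥] a, derivWithin f (Ico a b) x < 0 ∧ x < b := by
    rw [← nhdsWithin_Ico_eq_nhdsGE hab]
    exact ((hf.continuousOn_derivWithin hud le_rfl) a ha |>.eventually (gt_mem_nhds hf')).and
      (eventually_mem_nhdsWithin.mono fun x hx => hx.2)
  obtain ⟨c, hac, hc⟩ := mem_nhdsGE_iff_exists_Icc_subset.1 hneg
  have hcb : Icc a c ⊆ Ico a b := fun x hx => ⟨hx.1, (hc hx).2⟩
  refine ⟨c, ⟨hac, (hc (right_mem_Icc.2 (le_of_lt hac))).2⟩, ?_⟩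
  refine strictAntiOn_of_hasDerivWithinAt_neg (convex_Icc a c) (hf.continuousOn.mono hcb)
    (fun x hx => ?_) (fun x hx => (hc (interior_subset hx)).1)
  rw [interior_Icc] at hx ⊢
  exact ((hf.differentiableOn one_ne_zero x (hcb (Ioo_subset_Icc_self hx))).hasDerivWithinAt).mono
    (Ioo_subset_Icc_self.trans hcb)

theorem StrictAntiOn.bijOn_Ioo_of_continuousOn {f : ℝ → ℝ} {a c : ℝ} (hac : a ≤ c)
    (hf : StrictAntiOn f (Icc a c)) (hfc : ContinuousOn f (Icc a c)) :
    BijOn f (Ioo a c) (Ioo (f c) (f a)) :=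
  ⟨fun _ hx => ⟨hf (Ioo_subset_Icc_self hx) (right_mem_Icc.2 hac) hx.2,
      hf (left_mem_Icc.2 hac) (Ioo_subset_Icc_self hx) hx.1⟩,
    hf.injOn.mono Ioo_subset_Icc_self, intermediate_value_Ioo' hac hfc⟩

theorem derivWithin_const_mul_id_mul_at_zero {A : ℝ → ℝ} {s : Set ℝ} (c : ℝ)
    (hA : DifferentiableWithinAt ℝ A s 0) (hs : UniqueDiffWithinAt ℝ s 0) :
    derivWithin (fun x => c * x * A x) s 0 = c * A 0 := by
  have hlin : HasDerivWithinAt (fun x : ℝ => c * x) c s 0 := by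
    simpa using ((hasDerivAt_id (0:ℝ)).const_mul c).hasDerivWithinAt
  have h := (hlin.mul hA.hasDerivWithinAt).derivWithin hs
  simp only [mul_zero, zero_mul, add_zero] at h
  exact h

theorem energy_strictAnti_general (a : ℝ) (ha : 0 < a) (q : ℚ) (Ahat : ℝ → ℝ)
    (hC1 : ContDiffOn ℝ 1 Ahat (Set.Ico (0:ℝ) 1))
    (hAhat : ∀ β ∈ Set.Ico (0:ℝ) 1,
      Ahat β ∈ Set.Ioo 0 (1 / (1 + β)) ∧ (q : ℝ) * T₁ a β (Ahat β) = T₂ a β (Ahat β)) :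
    ∃ β₀ ∈ Set.Ioo (0:ℝ) 1,
      StrictAntiOn (fun β => -2 * a * β * Ahat β) (Set.Icc 0 β₀) ∧
      (-2 * a * (0:ℝ) * Ahat 0 = 0) ∧
      0 < -(-2 * a * β₀ * Ahat β₀) ∧
      Set.BijOn (fun β => -2 * a * β * Ahat β) (Set.Ioo 0 β₀)
        (Set.Ioo (-2 * a * β₀ * Ahat β₀) 0) := by
  set E : ℝ → ℝ := fun β => -2 * a * β * Ahat β
  have h0 : (0:ℝ) ∈ Ico (0:ℝ) 1 := left_mem_Ico.2 one_pos
  have hE : ContDiffOn ℝ 1 E (Ico 0 1) := (contDiffOn_const.mul contDiffOn_id).mul hC1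
  have hE' : derivWithin E (Ico 0 1) 0 < 0 := by
    rw [derivWithin_const_mul_id_mul_at_zero _ (hC1.differentiableOn one_ne_zero 0 h0)
      (uniqueDiffOn_Ico 0 1 0 h0)]
    nlinarith [(hAhat 0 h0).1.1]
  obtain ⟨β₀, hβ₀, hanti⟩ := exists_strictAntiOn_Icc_of_derivWithin_neg one_pos hE hE'
  have hE0 : E 0 = 0 := by simp [E]
  have hbij := hanti.bijOn_Ioo_of_continuousOn hβ₀.1.le
    (hE.continuousOn.mono fun x hx => ⟨hx.1, hx.2.trans_lt hβ₀.2⟩)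
  rw [hE0] at hbij
  have hEβ₀ : E β₀ < 0 := hE0 ▸ hanti (left_mem_Icc.2 hβ₀.1.le) (right_mem_Icc.2 hβ₀.1.le) hβ₀.1
  exact ⟨β₀, hβ₀, hanti, hE0, neg_pos.2 hEβ₀, hbij⟩

/-- If `Ahat : [0,1) → ℝ` is `C¹` and solves `q T₁(β,Ahat(β)) = T₂(β,Ahat(β))` with
`Ahat(β) ∈ (0, 1/(1+β))`, then there is `β₀ ∈ (0,1)` such that the energy
`E(β) = -2aβAhat(β)` is strictly decreasing on `[0,β₀]`; moreover `E(0) = 0`,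
`E₀ := -E(β₀) > 0`, and `E` is a (strictly decreasing) bijection from
`(0,β₀)` onto `(-E₀, 0)`. -/
theorem energy_strictAnti (a : ℝ) (ha : 0 < a) (q : ℚ) (hq : 0 < q) (Ahat : ℝ → ℝ)
    (hC1 : ContDiffOn ℝ 1 Ahat (Set.Ico (0:ℝ) 1))
    (hAhat : ∀ β ∈ Set.Ico (0:ℝ) 1,
      Ahat β ∈ Set.Ioo 0 (1 / (1 + β)) ∧ (q : ℝ) * T₁ a β (Ahat β) = T₂ a β (Ahat β)) :
    ∃ β₀ ∈ Set.Ioo (0:ℝ) 1,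
      StrictAntiOn (fun β => -2 * a * β * Ahat β) (Set.Icc 0 β₀) ∧
      (-2 * a * (0:ℝ) * Ahat 0 = 0) ∧
      0 < -(-2 * a * β₀ * Ahat β₀) ∧
      Set.BijOn (fun β => -2 * a * β * Ahat β) (Set.Ioo 0 β₀)
        (Set.Ioo (-2 * a * β₀ * Ahat β₀) 0) :=
  energy_strictAnti_general a ha q Ahat hC1 hAhat
end
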